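/- arXiv:2402.03942 — 3 statements merged into one kernel-verified Lean document; each statement's English description precedes it below -/
import Mathlib

section
/- Let β ∈ ℝ^{n+1} be nonzero with Δ = β/‖β‖₂, define ψ(z) = ⟨β, z⟩² and d(z',z) = ‖z'-z‖₂‖z'+z‖₂. Then for every z ∈ ℝ^{n+1}, every δ > 0, and every ε ∈ (0, ‖β‖₂²), there exists z̃ = z + kΔ for some k > 0 such that d(z̃, z) ≥ δ and ψ(z̃) - ψ(z) ≥ (‖β‖₂² - ε)·d(z̃, z). -/
/-!
Along the unit direction `Δ` of `β` the loss grows quadratically: with `z̃ = z + kΔ`,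
`ψ(z̃) - ψ(z) = 2k‖β‖⟪β, z⟫ + k²‖β‖² ≥ ‖β‖² k (k - 2‖z‖)`, while the cost is
`d(z̃, z) = k ‖2z + kΔ‖ ≤ k (k + 2‖z‖)`. The ratio of the two therefore tends to `‖β‖²` as
`k → ∞` while the cost grows without bound. Concretely, `k ≥ 2‖z‖ + δ + 1` makes the cost
at least `δ`, and `εk ≥ 4‖β‖²‖z‖` gives `(‖β‖² - ε)(k + 2‖z‖) ≤ ‖β‖²(k - 2‖z‖)`.
-/

open RealInnerProductSpace

section

variable {E : Type*} [NormedAddCommGroup E]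

lemma abs_norm_add_smul_sub_le [NormedSpace ℝ E] (w : E) {u : E} (hu : ‖u‖ = 1) {k : ℝ}
    (hk : 0 ≤ k) : |‖w + k • u‖ - k| ≤ ‖w‖ := by
  simpa [norm_smul, hu, abs_of_nonneg hk] using abs_norm_sub_norm_le (w + k • u) (k • u)

lemma norm_sub_mul_norm_add_of_add_smul [NormedSpace ℝ E] (z : E) {u : E} (hu : ‖u‖ = 1)
    {k : ℝ} (hk : 0 ≤ k) :
    ‖(z + k • u) - z‖ * ‖(z + k • u) + z‖ = k * ‖(2 : ℝ) • z + k • u‖ := by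
  rw [add_sub_cancel_left, norm_smul, hu, Real.norm_of_nonneg hk, mul_one, two_smul,
    add_right_comm]

variable [InnerProductSpace ℝ E]

lemma real_inner_smul_inv_norm_self (β : E) : ⟪β, ‖β‖⁻¹ • β⟫ = ‖β‖ := by
  rw [real_inner_smul_right, real_inner_self_eq_norm_sq, sq, ← mul_assoc, inv_mul_mul_self]

lemma sq_inner_add_smul_sub_sq_inner_ge (β z : E) {k : ℝ} (hk : 0 ≤ k) :
    ‖β‖ ^ 2 * k * (k - 2 * ‖z‖) ≤ ⟪β, z + k • (‖β‖⁻¹ • β)⟫ ^ 2 - ⟪β, z⟫ ^ 2 := by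
  have hz : -(‖β‖ * ‖z‖) ≤ ⟪β, z⟫ := (abs_le.mp (abs_real_inner_le_norm β z)).1
  rw [inner_add_right, real_inner_smul_right, real_inner_smul_inv_norm_self]
  nlinarith [mul_le_mul_of_nonneg_left hz (by positivity : 0 ≤ k * ‖β‖)]

end

theorem squared_loss_tightness_general (n : ℕ) (β : EuclideanSpace ℝ (Fin (n + 1)))
    (Δ : EuclideanSpace ℝ (Fin (n + 1))) (hΔ : Δ = ‖β‖⁻¹ • β)
    (ψ : EuclideanSpace ℝ (Fin (n + 1)) → ℝ)
    (hψ : ∀ z, ψ z = (inner ℝ β z : ℝ) ^ 2)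
    (d : EuclideanSpace ℝ (Fin (n + 1)) → EuclideanSpace ℝ (Fin (n + 1)) → ℝ)
    (hd : ∀ z' z, d z' z = ‖z' - z‖ * ‖z' + z‖) :
    ∀ z : EuclideanSpace ℝ (Fin (n + 1)), ∀ δ ε : ℝ, 0 < δ → 0 < ε → ε < ‖β‖ ^ 2 →
      ∃ k : ℝ, 0 < k ∧ δ ≤ d (z + k • Δ) z ∧
        (‖β‖ ^ 2 - ε) * d (z + k • Δ) z ≤ ψ (z + k • Δ) - ψ z := by
  intro z δ ε hδ hε hεβ
  have hβ : β ≠ 0 := by rintro rfl; rw [norm_zero] at hεβ; linarith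
  have hu : ‖Δ‖ = 1 := hΔ ▸ norm_smul_inv_norm hβ
  set k := 2 * ‖z‖ + δ + 1 + 4 * ‖β‖ ^ 2 * ‖z‖ / ε with hk
  have hk_ge : 2 * ‖z‖ + δ + 1 ≤ k := le_add_of_nonneg_right (by positivity)
  have hk0 : 0 < k := by linarith [norm_nonneg z]
  have hεk : 4 * ‖β‖ ^ 2 * ‖z‖ ≤ ε * k := by
    rw [hk, mul_add ε, mul_div_cancel₀ _ hε.ne']
    nlinarith [norm_nonneg z]
  have hcost : d (z + k • Δ) z = k * ‖(2 : ℝ) • z + k • Δ‖ := by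
    rw [hd, norm_sub_mul_norm_add_of_add_smul z hu hk0.le]
  have hN := abs_norm_add_smul_sub_le ((2 : ℝ) • z) hu hk0.le
  rw [norm_smul, Real.norm_two] at hN
  obtain ⟨hNlo, hNhi⟩ := abs_le.mp hN
  have hgain := sq_inner_add_smul_sub_sq_inner_ge β z hk0.le
  rw [← hΔ, ← hψ, ← hψ] at hgain
  have hN1 : 1 ≤ ‖(2 : ℝ) • z + k • Δ‖ := by linarith
  have hslope : (‖β‖ ^ 2 - ε) * (k + 2 * ‖z‖) ≤ ‖β‖ ^ 2 * (k - 2 * ‖z‖) := by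
    nlinarith [mul_nonneg hε.le (norm_nonneg z)]
  refine ⟨k, hk0, ?_, ?_⟩ <;> rw [hcost]
  · exact (by linarith [norm_nonneg z] : δ ≤ k).trans (le_mul_of_one_le_right hk0.le hN1)
  · nlinarith [mul_le_mul_of_nonneg_left hNhi (mul_nonneg (by linarith : 0 ≤ ‖β‖ ^ 2 - ε) hk0.le),
      mul_le_mul_of_nonneg_left hslope hk0.le]

/-- The weak Lipschitz constant `‖β‖₂²` of the squared linear loss is approximately
attained along the direction `Δ = β/‖β‖₂` at points with arbitrarily large cost. -/
theorem squared_loss_tightness (n : ℕ) (β : EuclideanSpace ℝ (Fin (n + 1))) (hβ : β ≠ 0)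
    (Δ : EuclideanSpace ℝ (Fin (n + 1))) (hΔ : Δ = ‖β‖⁻¹ • β)
    (ψ : EuclideanSpace ℝ (Fin (n + 1)) → ℝ)
    (hψ : ∀ z, ψ z = (inner ℝ β z : ℝ) ^ 2)
    (d : EuclideanSpace ℝ (Fin (n + 1)) → EuclideanSpace ℝ (Fin (n + 1)) → ℝ)
    (hd : ∀ z' z, d z' z = ‖z' - z‖ * ‖z' + z‖) :
    ∀ z : EuclideanSpace ℝ (Fin (n + 1)), ∀ δ ε : ℝ, 0 < δ → 0 < ε → ε < ‖β‖ ^ 2 →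
      ∃ k : ℝ, 0 < k ∧ δ ≤ d (z + k • Δ) z ∧
        (‖β‖ ^ 2 - ε) * d (z + k • Δ) z ≤ ψ (z + k • Δ) - ψ z :=
  squared_loss_tightness_general n β Δ hΔ ψ hψ d hd
end

section
/- Let β ∈ (0,1), ẑ ∈ (0, 1/2], and h(t) = t·log t + (1-t)·log(1-t) on (0,1). Set L = -β·log(β·ẑ) - (1/ẑ - β)·log(1 - β·ẑ). Then for every z ∈ (0,1), |h(βz) - h(βẑ)| ≤ L·|z - ẑ|. -/
/-!
With `H` the binary entropy, `h = -H` and `L = H(βẑ)/ẑ` is the slope of the chord of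
`g z = H(βz)` from `0` to `ẑ`. Since `g` is concave on `[0, 1]` with `g 0 = 0`, the slope of
the chord from `ẑ` to any `z ∈ [0, 1]` lies between the slope `(g 1 - g ẑ)/(1 - ẑ)` towards `1`
and the slope `g ẑ/ẑ` towards `0`; as `g 1 ≥ 0` and `ẑ ≤ 1 - ẑ`, the lower bound is at least
`-g ẑ/ẑ`.
-/

open Set Real

theorem ConcaveOn.secant_anti {𝕜 : Type*} [Field 𝕜] [LinearOrder 𝕜] [IsStrictOrderedRing 𝕜]
    {s : Set 𝕜} {f : 𝕜 → 𝕜} (hf : ConcaveOn 𝕜 s f) {a x y : 𝕜} (ha : a ∈ s) (hx : x ∈ s)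
    (hy : y ∈ s) (hxa : x ≠ a) (hya : y ≠ a) (hxy : x ≤ y) :
    (f y - f a) / (y - a) ≤ (f x - f a) / (x - a) := by
  have := hf.neg.secant_mono ha hx hy hxa hya hxy
  rw [← neg_le_neg_iff]
  convert this using 1 <;> simp only [Pi.neg_apply] <;> ring

theorem ConcaveOn.abs_sub_le_div_mul_abs_sub {f : ℝ → ℝ} (hf : ConcaveOn ℝ (Icc 0 1) f)
    (h0 : f 0 = 0) (h1 : 0 ≤ f 1) {c z : ℝ} (hc0 : 0 < c) (hc : c ≤ 1 / 2) (hz : z ∈ Icc 0 1) :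
    |f z - f c| ≤ f c / c * |z - c| := by
  rcases eq_or_ne z c with rfl | hzc
  · simp
  have hc_mem : c ∈ Icc (0 : ℝ) 1 := ⟨hc0.le, by linarith⟩
  set m := (f z - f c) / (z - c)
  have hm_le : m ≤ f c / c := by
    simpa [h0, neg_div_neg_eq] using
      hf.secant_anti hc_mem (left_mem_Icc.2 zero_le_one) hz hc0.ne hzc hz.1
  have hm_ge : (f 1 - f c) / (1 - c) ≤ m :=
    hf.secant_anti hc_mem hz (right_mem_Icc.2 zero_le_one) hzc (by linarith) hz.2
  have hfc : 0 ≤ f c := by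
    have := hm_ge.trans hm_le
    rw [div_le_div_iff₀ (by linarith) hc0] at this
    nlinarith
  have hm_ge' : -(f c / c) ≤ m :=
    calc -(f c / c) ≤ -(f c / (1 - c)) := by gcongr; linarith
      _ = (0 - f c) / (1 - c) := by ring
      _ ≤ m := le_trans (by gcongr; linarith) hm_ge
  calc |f z - f c| = |m| * |z - c| := by
        rw [← abs_mul, div_mul_cancel₀ _ (sub_ne_zero.2 hzc)]
    _ ≤ f c / c * |z - c| := by gcongr; exact abs_le.2 ⟨hm_ge', hm_le⟩

theorem concaveOn_binEntropy_comp_mul {β : ℝ} (hβ0 : 0 ≤ β) (hβ1 : β ≤ 1) :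
    ConcaveOn ℝ (Icc 0 1) (fun z ↦ binEntropy (β * z)) := by
  exact (strictConcave_binEntropy.concaveOn.comp_linearMap (LinearMap.mulLeft ℝ β)).subset
    (fun z hz ↦ ⟨mul_nonneg hβ0 hz.1, mul_le_one₀ hβ1 hz.1 hz.2⟩) (convex_Icc 0 1)

theorem neg_binEntropy_eq (t : ℝ) : -binEntropy t = t * log t + (1 - t) * log (1 - t) := by
  simp only [binEntropy, log_inv]
  ring

/-- Weak Lipschitz property of the binary cross-entropy loss `z ↦ h(βz)` at the
single point `ẑ ∈ (0, 1/2]`, with constant `L = -β log(βẑ) - (1/ẑ - β) log(1-βẑ)`. -/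
theorem binary_cross_entropy_weak_lipschitz (β zhat : ℝ)
    (hβ : β ∈ Set.Ioo (0:ℝ) 1) (hz : zhat ∈ Set.Ioc (0:ℝ) (1/2))
    (h : ℝ → ℝ)
    (hdef : ∀ t, h t = t * Real.log t + (1 - t) * Real.log (1 - t))
    (L : ℝ)
    (hL : L = -β * Real.log (β * zhat) - (1 / zhat - β) * Real.log (1 - β * zhat)) :
    ∀ z ∈ Set.Ioo (0:ℝ) 1, |h (β * z) - h (β * zhat)| ≤ L * |z - zhat| := by
  intro z hz'
  obtain ⟨hβ0, hβ1⟩ := hβ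
  obtain ⟨hzhat0, hzhat⟩ := hz
  have hL' : L = binEntropy (β * zhat) / zhat := by
    rw [hL, ← neg_neg (binEntropy _), neg_binEntropy_eq]
    field_simp
    ring
  simp only [hdef, ← neg_binEntropy_eq, neg_sub_neg, hL']
  rw [abs_sub_comm]
  exact (concaveOn_binEntropy_comp_mul hβ0.le hβ1.le).abs_sub_le_div_mul_abs_sub (by simp)
    (by simpa using binEntropy_nonneg hβ0.le hβ1.le) hzhat0 hzhat (Ioo_subset_Icc_self hz')
end

section
/- Let h(t) = max{0, min{1, (t+1)/2}} be the hard sigmoid, β ∈ ℝⁿ with dual norm ‖β‖* = θ > 0, and α ∈ ℝⁿ with ‖α‖ = 1 and ⟨α, β⟩ = θ. Let z̄ = -(3/θ)·α and ψ(z) = h(⟨β, z⟩). Then for all z ∈ ℝⁿ, |ψ(z) - ψ(z̄)| ≤ (θ/4)·‖z - z̄‖. -/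
/-!
The hard sigmoid `h` vanishes on `(-∞, -1]` and is `1/2`-Lipschitz, so measured from
`h (-3) = 0` it grows by at most `1/4` per unit: `|h t - h (-3)| ≤ |t + 3| / 4`.
Since `⟨β, z̄⟩ = -3` and `|⟨β, w⟩| ≤ θ ‖w‖` by the definition of the dual norm, composing the
two bounds gives the claim.
-/

noncomputable def hardSigmoid (t : ℝ) : ℝ := max 0 (min 1 ((t + 1) / 2))

theorem abs_hardSigmoid_sub_hardSigmoid_neg_three_le (t : ℝ) :
    |hardSigmoid t - hardSigmoid (-3)| ≤ |t + 3| / 4 := by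
  have h_neg_three : hardSigmoid (-3) = 0 := by norm_num [hardSigmoid]
  rw [h_neg_three, sub_zero, abs_of_nonneg (le_max_left _ _), hardSigmoid]
  refine max_le (by positivity) ?_
  rcases le_total t 1 with ht | ht
  · exact (min_le_right _ _).trans (by cases abs_cases (t + 3) <;> linarith)
  · exact (min_le_left _ _).trans (by rw [abs_of_nonneg (by linarith)]; linarith)

section DualNorm

variable {E : Type*} [AddCommGroup E] [Module ℝ E]

theorem Seminorm.apply_le_mul_of_mem_upperBounds (p : Seminorm ℝ E) (hp : ∀ x, p x = 0 → x = 0)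
    (f : E →ₗ[ℝ] ℝ) {θ : ℝ} (hθ : θ ∈ upperBounds {s | ∃ y, p y = 1 ∧ s = f y}) (x : E) :
    f x ≤ θ * p x := by
  rcases eq_or_ne x 0 with rfl | hx
  · simp
  have hpx : 0 < p x := (apply_nonneg p x).lt_of_ne' (mt (hp x) hx)
  have h_unit : p ((p x)⁻¹ • x) = 1 := by
    rw [map_smul_eq_mul, Real.norm_of_nonneg (inv_nonneg.2 hpx.le), inv_mul_cancel₀ hpx.ne']
  have h_le : (p x)⁻¹ * f x ≤ θ := hθ ⟨_, h_unit, by rw [map_smul, smul_eq_mul]⟩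
  calc f x = p x * ((p x)⁻¹ * f x) := by field_simp
    _ ≤ p x * θ := by gcongr
    _ = θ * p x := mul_comm _ _

theorem Seminorm.abs_apply_le_mul_of_mem_upperBounds (p : Seminorm ℝ E)
    (hp : ∀ x, p x = 0 → x = 0) (f : E →ₗ[ℝ] ℝ) {θ : ℝ}
    (hθ : θ ∈ upperBounds {s | ∃ y, p y = 1 ∧ s = f y}) (x : E) :
    |f x| ≤ θ * p x := by
  have h_neg := p.apply_le_mul_of_mem_upperBounds hp f hθ (-x)
  rw [map_neg, map_neg_eq_map] at h_neg
  exact abs_le.2 ⟨by linarith, p.apply_le_mul_of_mem_upperBounds hp f hθ x⟩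

end DualNorm

theorem hard_sigmoid_weak_lipschitz_at_zbar_general (n : ℕ)
    (N : (Fin n → ℝ) → ℝ)
    (hN_add : ∀ x y, N (x + y) ≤ N x + N y)
    (hN_smul : ∀ (a : ℝ) (x), N (a • x) = |a| * N x)
    (hN_zero : ∀ x, N x = 0 ↔ x = 0)
    (β α : Fin n → ℝ) (θ : ℝ) (hθ : 0 < θ)
    (hdual : IsLUB {s | ∃ y, N y = 1 ∧ s = ∑ i, β i * y i} θ)
    (hαβ : ∑ i, α i * β i = θ)
    (zbar : Fin n → ℝ) (hzbar : zbar = (-(3 / θ)) • α)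
    (h : ℝ → ℝ) (hdef : ∀ t, h t = max 0 (min 1 ((t + 1) / 2)))
    (ψ : (Fin n → ℝ) → ℝ) (hψ : ∀ z, ψ z = h (∑ i, β i * z i)) :
    ∀ z, |ψ z - ψ zbar| ≤ θ / 4 * N (z - zbar) := by
  intro z
  let p : Seminorm ℝ (Fin n → ℝ) := .of N hN_add hN_smul
  let f : (Fin n → ℝ) →ₗ[ℝ] ℝ := dotProductBilin ℝ ℝ β
  have hψf : ∀ z, ψ z = hardSigmoid (f z) := fun z => (hψ z).trans (hdef _)
  have hf_zbar : f zbar = -3 := by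
    rw [hzbar, map_smul, smul_eq_mul]
    change -(3 / θ) * ∑ i, β i * α i = -3
    simp_rw [mul_comm (β _), hαβ]
    field_simp
  calc |ψ z - ψ zbar| = |hardSigmoid (f z) - hardSigmoid (-3)| := by rw [hψf, hψf, hf_zbar]
    _ ≤ |f (z - zbar)| / 4 := by
      rw [map_sub, hf_zbar, sub_neg_eq_add]
      exact abs_hardSigmoid_sub_hardSigmoid_neg_three_le _
    _ ≤ θ * p (z - zbar) / 4 := by
      gcongr
      exact p.abs_apply_le_mul_of_mem_upperBounds (fun x => (hN_zero x).1) f hdual.1 _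
    _ = θ / 4 * N (z - zbar) := mul_div_right_comm _ _ _

/-- Weak Lipschitz property of the hard sigmoid loss `ψ(z) = h(⟨β,z⟩)` at the point
`z̄ = -(3/θ)α`, with constant `θ/4` (θ being the dual norm of β). -/
theorem hard_sigmoid_weak_lipschitz_at_zbar (n : ℕ)
    (N : (Fin n → ℝ) → ℝ)
    (hN_add : ∀ x y, N (x + y) ≤ N x + N y)
    (hN_smul : ∀ (a : ℝ) (x), N (a • x) = |a| * N x)
    (hN_zero : ∀ x, N x = 0 ↔ x = 0)
    (β α : Fin n → ℝ) (θ : ℝ) (hθ : 0 < θ)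
    (hdual : IsLUB {s | ∃ y, N y = 1 ∧ s = ∑ i, β i * y i} θ)
    (hα : N α = 1) (hαβ : ∑ i, α i * β i = θ)
    (zbar : Fin n → ℝ) (hzbar : zbar = (-(3 / θ)) • α)
    (h : ℝ → ℝ) (hdef : ∀ t, h t = max 0 (min 1 ((t + 1) / 2)))
    (ψ : (Fin n → ℝ) → ℝ) (hψ : ∀ z, ψ z = h (∑ i, β i * z i)) :
    ∀ z, |ψ z - ψ zbar| ≤ θ / 4 * N (z - zbar) :=
  hard_sigmoid_weak_lipschitz_at_zbar_general n N hN_add hN_smul hN_zero β α θ hθ hdual hαβ zbar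
    hzbar h hdef ψ hψ
end
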